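/- arXiv:0910.0597 — 4 statements merged into one kernel-verified Lean document; each statement's English description precedes it below -/
import Mathlib

section
/- Let T > 0, C > 0 and x > 0, and let (K_m)_{m≥0} be a sequence of monotone increasing continuous functions from [0,T] to [0,∞) such that K_0(0) = 0, K_m(t) ≤ K_{m+1}(t) for every m ≥ 0 and t ∈ [0,T], and K_{m+1}(t) ≤ K_0(t) + C·K_m(t)² + C·K_m(t)·t^x for every m ≥ 0 and t ∈ (0,T]. Then there exist τ ∈ (0,T] and a constant C' > 0 such that K_m(t) ≤ C'·K_0(t) for every m ≥ 0 and every t ∈ [0,τ]. -/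
/-- Iteration bound for the successive-approximation majorants. -/
theorem iteration_bound
    (T C x : ℝ) (hT : 0 < T) (hC : 0 < C) (hx : 0 < x)
    (K : ℕ → ℝ → ℝ)
    (hmono : ∀ m, MonotoneOn (K m) (Set.Icc 0 T))
    (hcont : ∀ m, ContinuousOn (K m) (Set.Icc 0 T))
    (hnonneg : ∀ m, ∀ t ∈ Set.Icc (0:ℝ) T, 0 ≤ K m t)
    (hK0 : K 0 0 = 0)
    (hle : ∀ m, ∀ t ∈ Set.Icc (0:ℝ) T, K m t ≤ K (m + 1) t)
    (hrec : ∀ m, ∀ t ∈ Set.Ioc (0:ℝ) T,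
      K (m + 1) t ≤ K 0 t + C * (K m t) ^ 2 + C * K m t * t ^ x) :
    ∃ τ ∈ Set.Ioc (0:ℝ) T, ∃ C' > 0, ∀ m, ∀ t ∈ Set.Icc (0:ℝ) τ,
      K m t ≤ C' * K 0 t := by
  -- choose τ0 with τ0^x ≤ 1/(4C)
  set a : ℝ := (1 / (4 * C)) ^ x⁻¹ with ha
  have ha0 : 0 < a := Real.rpow_pos_of_pos (by positivity) _
  have hax : a ^ x = 1 / (4 * C) := Real.rpow_inv_rpow (by positivity) hx.ne'
  -- continuity of K 0 at 0 gives δ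
  have hc0 : ContinuousWithinAt (K 0) (Set.Icc 0 T) 0 :=
    hcont 0 0 ⟨le_refl _, hT.le⟩
  rw [ContinuousWithinAt, hK0, Metric.tendsto_nhdsWithin_nhds] at hc0
  obtain ⟨δ, hδ0, hδ⟩ := hc0 (1 / (8 * C)) (by positivity)
  set τ : ℝ := min (min (δ / 2) a) T with hτdef
  have hτ0 : 0 < τ := lt_min (lt_min (by linarith) ha0) hT
  have hτT : τ ≤ T := min_le_right _ _
  have hτa : τ ≤ a := (min_le_left _ _).trans (min_le_right _ _)
  have hτδ : τ < δ := lt_of_le_of_lt ((min_le_left _ _).trans (min_le_left _ _)) (by linarith)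
  have hτmem : τ ∈ Set.Icc (0:ℝ) T := ⟨hτ0.le, hτT⟩
  have hK0τ : K 0 τ ≤ 1 / (8 * C) := by
    have := hδ hτmem (by rw [Real.dist_eq, sub_zero, abs_of_pos hτ0]; exact hτδ)
    rw [Real.dist_eq, sub_zero] at this
    calc K 0 τ ≤ |K 0 τ| := le_abs_self _
    _ ≤ 1 / (8 * C) := this.le
  have hτx : τ ^ x ≤ 1 / (4 * C) := by
    rw [← hax]; exact Real.rpow_le_rpow hτ0.le hτa hx.le
  -- main induction on Ioc 0 τ
  have key : ∀ m, ∀ t ∈ Set.Ioc (0:ℝ) τ, K m t ≤ 2 * K 0 t := by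
    intro m
    induction m with
    | zero =>
      intro t ht
      have ht' : t ∈ Set.Icc (0:ℝ) T := ⟨ht.1.le, ht.2.trans hτT⟩
      have := hnonneg 0 t ht'; linarith
    | succ m ih =>
      intro t ht
      have ht' : t ∈ Set.Icc (0:ℝ) T := ⟨ht.1.le, ht.2.trans hτT⟩
      have htI : t ∈ Set.Ioc (0:ℝ) T := ⟨ht.1, ht.2.trans hτT⟩
      have h1 := hrec m t htI
      have h2 := ih t ht
      have hKt0 : 0 ≤ K 0 t := hnonneg 0 t ht'
      have hKm0 : 0 ≤ K m t := hnonneg m t ht'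
      have hmon : K 0 t ≤ K 0 τ := hmono 0 ht' hτmem ht.2
      have htx : t ^ x ≤ 1 / (4 * C) := by
        calc t ^ x ≤ τ ^ x := Real.rpow_le_rpow ht.1.le ht.2 hx.le
        _ ≤ 1 / (4 * C) := hτx
      have htx0 : 0 ≤ t ^ x := Real.rpow_nonneg ht.1.le _
      have hsq : C * (K m t) ^ 2 ≤ K 0 t / 2 := by
        have : (K m t) ^ 2 ≤ (2 * K 0 t) * (2 * K 0 τ) := by
          rw [sq]
          apply mul_le_mul h2 (h2.trans (by nlinarith)) hKm0 (by linarith)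
        calc C * (K m t) ^ 2 ≤ C * ((2 * K 0 t) * (2 * K 0 τ)) := by
              exact mul_le_mul_of_nonneg_left this hC.le
        _ ≤ C * ((2 * K 0 t) * (2 * (1 / (8 * C)))) := by
              apply mul_le_mul_of_nonneg_left _ hC.le
              apply mul_le_mul_of_nonneg_left (by linarith) (by linarith)
        _ = K 0 t / 2 := by field_simp; ring
      have hlin : C * K m t * t ^ x ≤ K 0 t / 2 := by
        calc C * K m t * t ^ x ≤ C * (2 * K 0 t) * (1 / (4 * C)) := by
              apply mul_le_mul (mul_le_mul_of_nonneg_left h2 hC.le) htx htx0 (by positivity)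
        _ = K 0 t / 2 := by field_simp; ring
      linarith
  refine ⟨τ, ⟨hτ0, hτT⟩, 2, by norm_num, fun m t ht => ?_⟩
  rcases eq_or_lt_of_le ht.1 with h0 | h0
  · -- t = 0 : show K m 0 ≤ 0 by limiting argument
    subst h0
    rw [hK0, mul_zero]
    have hne : (nhdsWithin (0:ℝ) (Set.Ioc 0 τ)).NeBot := left_nhdsWithin_Ioc_neBot hτ0
    have htend : Filter.Tendsto (fun s => 2 * K 0 s) (nhdsWithin 0 (Set.Ioc 0 τ))
        (nhds 0) := by
      have : Filter.Tendsto (K 0) (nhdsWithin 0 (Set.Ioc 0 τ)) (nhds 0) := by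
        have h := (hcont 0 0 ⟨le_refl _, hT.le⟩)
        rw [ContinuousWithinAt, hK0] at h
        exact h.mono_left (nhdsWithin_mono _ (fun s hs => ⟨hs.1.le, hs.2.trans hτT⟩))
      have := this.const_mul (2:ℝ)
      simpa using this
    refine ge_of_tendsto htend ?_
    filter_upwards [self_mem_nhdsWithin] with s hs
    calc K m 0 ≤ K m s := hmono m ⟨le_refl _, hT.le⟩ ⟨hs.1.le, hs.2.trans hτT⟩ hs.1.le
    _ ≤ 2 * K 0 s := key m s hs
  · exact key m t ⟨h0, ht.2⟩
end

section
/- Let T > 0, C > 0 and y > 0, and let (K_m)_{m≥0} be a sequence of monotone increasing continuous functions from [0,T] to [0,∞) such that K_m(0) = 0 for every m ≥ 0, K_m(t) ≤ K_{m+1}(t) for every m ≥ 0 and t ∈ [0,T], and K_{m+2}(t) ≤ C(K_0(t) + K_{m+1}(t)² + K_m(t)²) + C·K_{m+1}(t)·t^y for every m ≥ 0 and t ∈ (0,T]. Then there exist τ ∈ (0,T] and a constant C' > 0 such that K_m(t) ≤ C'·K_0(t) for every m ≥ 0 and every t ∈ [0,τ]. -/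
/-!
Choose `B = 4C + 1` and `ε = 1 / (B (2B + 1))`. Near `t = 0` the values `K₁(t)` (continuity
and `K₁(0) = 0`), hence `K₀(t) ≤ K₁(t)`, and `t ^ y` are all at most `ε`. At such a time the quadratic
terms of the recursion are absorbed into linear ones, `K² ≤ ε K`: from `K₁ ≤ K₂` the recursion
with `m = 0` gives `K₁ ≤ B K₀`, and then a two-step induction propagates `K_m ≤ B K₀`.
-/

open Set Filter Topology

namespace TwoStepQuadratic

variable {C B ε s : ℝ} {a : ℕ → ℝ}
  (hC : 0 ≤ C) (hB : 4 * C + 1 ≤ B) (hε : ε * (B * (2 * B + 1)) ≤ 1)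
  (ha : Monotone a) (ha₀ : 0 ≤ a 0) (ha₁ : a 1 ≤ ε) (hs₀ : 0 ≤ s) (hs : s ≤ ε)
  (hrec : ∀ m, a (m + 2) ≤ C * (a 0 + a (m + 1) ^ 2 + a m ^ 2) + C * a (m + 1) * s)
include hC hB hε ha ha₀ ha₁ hs₀ hs hrec

theorem one_le_mul_zero : a 1 ≤ B * a 0 := by
  have ha₀₁ : a 0 ≤ a 1 := ha zero_le_one
  have hε₀ : 0 ≤ ε := hs₀.trans hs
  have hCε : 12 * C * ε + 3 * ε ≤ 1 := by
    have h3B : 12 * C + 3 ≤ B * (2 * B + 1) := by nlinarith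
    nlinarith [mul_le_mul_of_nonneg_left h3B hε₀]
  have hsq₀ : a 0 ^ 2 ≤ ε * a 0 := by nlinarith
  have hsq₁ : a 1 ^ 2 ≤ ε * a 1 := by nlinarith
  have hlin : a 1 * s ≤ ε * a 1 := by nlinarith
  have hquad : a 1 ≤ C * (1 + ε) * a 0 + 2 * C * ε * a 1 := calc
    a 1 ≤ a 2 := ha one_le_two
    _ ≤ C * (a 0 + a 1 ^ 2 + a 0 ^ 2) + C * a 1 * s := hrec 0
    _ ≤ C * (1 + ε) * a 0 + 2 * C * ε * a 1 := by
      nlinarith [mul_le_mul_of_nonneg_left hsq₀ hC, mul_le_mul_of_nonneg_left hsq₁ hC,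
        mul_le_mul_of_nonneg_left hlin hC]
  nlinarith [mul_nonneg (mul_nonneg hC hε₀) (ha₀.trans ha₀₁), mul_nonneg hC ha₀]

theorem le_mul_zero_two_step {m : ℕ} (hm : a m ≤ B * a 0) (hm₁ : a (m + 1) ≤ B * a 0) :
    a (m + 2) ≤ B * a 0 := by
  have hB₀ : 0 ≤ B * a 0 := mul_nonneg (by linarith) ha₀
  have hsq : (B * a 0) ^ 2 ≤ B ^ 2 * ε * a 0 := by
    nlinarith [mul_le_mul_of_nonneg_left (mul_le_mul_of_nonneg_right
      ((ha zero_le_one).trans ha₁) ha₀) (sq_nonneg B)]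
  have hsq₁ := (pow_le_pow_left₀ (ha₀.trans (ha (Nat.zero_le _))) hm₁ 2).trans hsq
  have hsq₀ := (pow_le_pow_left₀ (ha₀.trans (ha (Nat.zero_le _))) hm 2).trans hsq
  have hlin : a (m + 1) * s ≤ B * a 0 * ε := mul_le_mul hm₁ hs hs₀ hB₀
  calc a (m + 2) ≤ C * (a 0 + a (m + 1) ^ 2 + a m ^ 2) + C * a (m + 1) * s := hrec m
    _ ≤ C * a 0 + C * a 0 * (ε * (B * (2 * B + 1))) := by
      nlinarith [mul_le_mul_of_nonneg_left hsq₀ hC, mul_le_mul_of_nonneg_left hsq₁ hC,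
        mul_le_mul_of_nonneg_left hlin hC]
    _ ≤ B * a 0 := by nlinarith [mul_nonneg hC ha₀]

theorem le_mul_zero (m : ℕ) : a m ≤ B * a 0 := by
  induction m using Nat.twoStepInduction with
  | zero => nlinarith
  | one => exact one_le_mul_zero hC hB hε ha ha₀ ha₁ hs₀ hs hrec
  | more m hm hm₁ => exact le_mul_zero_two_step hC hB hε ha ha₀ ha₁ hs₀ hs hrec hm hm₁

end TwoStepQuadratic

theorem two_step_iteration_bound_general
    (T C y : ℝ) (hT : 0 < T) (hC : 0 < C) (hy : 0 < y)
    (K : ℕ → ℝ → ℝ)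
    (hcont : ∀ m, ContinuousOn (K m) (Set.Icc 0 T))
    (hnonneg : ∀ m, ∀ t ∈ Set.Icc (0:ℝ) T, 0 ≤ K m t)
    (hK0 : ∀ m, K m 0 = 0)
    (hle : ∀ m, ∀ t ∈ Set.Icc (0:ℝ) T, K m t ≤ K (m + 1) t)
    (hrec : ∀ m, ∀ t ∈ Set.Ioc (0:ℝ) T,
      K (m + 2) t ≤ C * (K 0 t + (K (m + 1) t) ^ 2 + (K m t) ^ 2) + C * K (m + 1) t * t ^ y) :
    ∃ τ ∈ Set.Ioc (0:ℝ) T, ∃ C' > 0, ∀ m, ∀ t ∈ Set.Icc (0:ℝ) τ,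
      K m t ≤ C' * K 0 t := by
  set B := 4 * C + 1
  set ε := 1 / (B * (2 * B + 1))
  have hB : 0 < B := by positivity
  have hε : 0 < ε := by positivity
  have hK₁ : Tendsto (K 1) (𝓝[≥] 0) (𝓝 0) := by
    simpa [hK0] using (((hcont 1).continuousWithinAt ⟨le_rfl, hT.le⟩).mono_of_mem_nhdsWithin
      (Icc_mem_nhdsGE hT)).tendsto
  have hpow : Tendsto (fun t : ℝ ↦ t ^ y) (𝓝[≥] 0) (𝓝 0) := by
    simpa [Real.zero_rpow hy.ne'] using
      (Real.continuousAt_rpow_const 0 y (Or.inr hy.le)).tendsto.mono_left nhdsWithin_le_nhds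
  have hsmall : ∀ᶠ t in 𝓝[≥] 0, t ≤ T ∧ K 1 t ≤ ε ∧ t ^ y ≤ ε :=
    (eventually_of_mem (Icc_mem_nhdsGE hT) fun _ ht ↦ ht.2).and
      ((hK₁.eventually (ge_mem_nhds hε)).and (hpow.eventually (ge_mem_nhds hε)))
  obtain ⟨τ, hτ, hτsmall⟩ := mem_nhdsGE_iff_exists_Icc_subset.1 hsmall
  refine ⟨τ, ⟨hτ, (hτsmall ⟨hτ.le, le_rfl⟩).1⟩, B, hB, fun m t ht ↦ ?_⟩
  obtain ⟨htT, hK₁t, hpowt⟩ := hτsmall ht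
  have htI : t ∈ Icc 0 T := ⟨ht.1, htT⟩
  rcases ht.1.eq_or_lt with rfl | ht₀
  · simp [hK0]
  exact TwoStepQuadratic.le_mul_zero (a := fun m ↦ K m t) hC.le le_rfl
    (by rw [div_mul_cancel₀ _ (by positivity)]) (monotone_nat_of_le_succ fun m ↦ hle m t htI)
    (hnonneg 0 t htI) hK₁t (by positivity) hpowt (fun m ↦ hrec m t ⟨ht₀, htT⟩) m

/-- Two-step iteration bound for the successive-approximation majorants. -/
theorem two_step_iteration_bound
    (T C y : ℝ) (hT : 0 < T) (hC : 0 < C) (hy : 0 < y)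
    (K : ℕ → ℝ → ℝ)
    (hmono : ∀ m, MonotoneOn (K m) (Set.Icc 0 T))
    (hcont : ∀ m, ContinuousOn (K m) (Set.Icc 0 T))
    (hnonneg : ∀ m, ∀ t ∈ Set.Icc (0:ℝ) T, 0 ≤ K m t)
    (hK0 : ∀ m, K m 0 = 0)
    (hle : ∀ m, ∀ t ∈ Set.Icc (0:ℝ) T, K m t ≤ K (m + 1) t)
    (hrec : ∀ m, ∀ t ∈ Set.Ioc (0:ℝ) T,
      K (m + 2) t ≤ C * (K 0 t + (K (m + 1) t) ^ 2 + (K m t) ^ 2) + C * K (m + 1) t * t ^ y) :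
    ∃ τ ∈ Set.Ioc (0:ℝ) T, ∃ C' > 0, ∀ m, ∀ t ∈ Set.Icc (0:ℝ) τ,
      K m t ≤ C' * K 0 t :=
  two_step_iteration_bound_general T C y hT hC hy K hcont hnonneg hK0 hle hrec
end

section
/- Let a > 0 and b > 0 satisfy 4ab < 1, let t₀ ≥ 0, and let E : [t₀,∞) → ℝ be a continuous function such that 0 ≤ E(t) and E(t) ≤ a + b·E(t)² for every t ≥ t₀. If E(t₀) ≤ 2a, then E(t) ≤ (1 − √(1 − 4ab))/(2b) ≤ 2a for every t ≥ t₀. -/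
/-!
Since `4ab < 1`, the quadratic `b z² - z + a` has two real roots `r < R`, and `E ≤ a + b E²`
says exactly that `E` never takes a value in the gap `(r, R)`. The image of the connected
half-line `[t₀, ∞)` under the continuous `E` is an interval, so it cannot jump over the gap;
as `E t₀ ≤ 2a < R`, it stays in `(-∞, r]`. Finally `r ≤ 2a` because `1 - √(1 - 4ab) ≤ 4ab`.
-/

open Set

theorem IsPreconnected.forall_le_of_forall_le_or_le {α β : Type*} [TopologicalSpace α]
    [TopologicalSpace β] [LinearOrder β] [OrderClosedTopology β] [DenselyOrdered β]
    {s : Set α} (hs : IsPreconnected s) {f : α → β} (hf : ContinuousOn f s) {r R : β}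
    (hrR : r < R) (hgap : ∀ x ∈ s, f x ≤ r ∨ R ≤ f x) {x₀ : α} (hx₀ : x₀ ∈ s)
    (h₀ : f x₀ < R) : ∀ x ∈ s, f x ≤ r := by
  intro x hx
  by_contra! hrx
  have hRx : R ≤ f x := (hgap x hx).resolve_left hrx.not_ge
  obtain ⟨m, hm_lo, hmR⟩ := exists_between (max_lt h₀ hrR)
  obtain ⟨y, hy, hfy⟩ := hs.intermediate_value hx₀ hx hf
    ⟨(le_max_left _ _).trans hm_lo.le, hmR.le.trans hRx⟩
  rcases hgap y hy with hyr | hRy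
  · exact (hfy ▸ hyr).not_gt ((le_max_right _ _).trans_lt hm_lo)
  · exact (hfy ▸ hRy).not_gt hmR

-- the two roots of `b z² - z + a`
noncomputable def smallerRoot (a b : ℝ) : ℝ := (1 - √(1 - 4 * a * b)) / (2 * b)

noncomputable def largerRoot (a b : ℝ) : ℝ := (1 + √(1 - 4 * a * b)) / (2 * b)

section Roots

variable {a b : ℝ}

theorem smallerRoot_lt_largerRoot (hb : 0 < b) (hab : 4 * a * b < 1) :
    smallerRoot a b < largerRoot a b := by
  have hs : 0 < √(1 - 4 * a * b) := Real.sqrt_pos.mpr (by linarith)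
  exact div_lt_div_of_pos_right (by linarith) (by positivity)

theorem le_smallerRoot_or_largerRoot_le (hb : 0 < b) (hab : 4 * a * b ≤ 1) {z : ℝ}
    (hz : z ≤ a + b * z ^ 2) : z ≤ smallerRoot a b ∨ largerRoot a b ≤ z := by
  have hs_sq : √(1 - 4 * a * b) ^ 2 = 1 - 4 * a * b := Real.sq_sqrt (by linarith)
  have hfactor : b * z ^ 2 - z + a = b * (z - smallerRoot a b) * (z - largerRoot a b) := by
    rw [smallerRoot, largerRoot]
    generalize √(1 - 4 * a * b) = s at hs_sq ⊢
    field_simp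
    linear_combination hs_sq
  by_contra! h
  obtain ⟨hr, hR⟩ := h
  have : b * (z - smallerRoot a b) * (z - largerRoot a b) < 0 :=
    mul_neg_of_pos_of_neg (mul_pos hb (by linarith)) (by linarith)
  linarith

theorem smallerRoot_le_two_mul (ha : 0 ≤ a) (hb : 0 < b) (hab : 4 * a * b ≤ 1) :
    smallerRoot a b ≤ 2 * a := by
  set s := √(1 - 4 * a * b)
  have hs_sq : s ^ 2 = 1 - 4 * a * b := Real.sq_sqrt (by linarith)
  have hs_le_one : s ≤ 1 := Real.sqrt_le_one.mpr (by nlinarith)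
  -- `1 - s ≤ 1 - s² = 4ab` because `0 ≤ s ≤ 1`
  have : 1 - s ≤ 4 * a * b := by nlinarith [Real.sqrt_nonneg (1 - 4 * a * b)]
  rw [smallerRoot, div_le_iff₀ (by positivity)]
  linarith

theorem two_mul_lt_largerRoot (hb : 0 < b) (hab : 4 * a * b < 1) :
    2 * a < largerRoot a b := by
  set s := √(1 - 4 * a * b)
  have hs_sq : s ^ 2 = 1 - 4 * a * b := Real.sq_sqrt (by linarith)
  have hs : 0 < s := Real.sqrt_pos.mpr (by linarith)
  rw [largerRoot, lt_div_iff₀ (by positivity)]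
  nlinarith

end Roots

theorem quadratic_bootstrap_general
    (a b t₀ : ℝ) (ha : 0 < a) (hb : 0 < b) (hab : 4 * a * b < 1)
    (E : ℝ → ℝ)
    (hE_cont : ContinuousOn E (Set.Ici t₀))
    (hE_bound : ∀ t ∈ Set.Ici t₀, E t ≤ a + b * (E t) ^ 2)
    (hE_init : E t₀ ≤ 2 * a) :
    (1 - Real.sqrt (1 - 4 * a * b)) / (2 * b) ≤ 2 * a ∧
      ∀ t ∈ Set.Ici t₀, E t ≤ (1 - Real.sqrt (1 - 4 * a * b)) / (2 * b) :=
  ⟨smallerRoot_le_two_mul ha.le hb hab.le,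
    isPreconnected_Ici.forall_le_of_forall_le_or_le hE_cont (smallerRoot_lt_largerRoot hb hab)
      (fun t ht => le_smallerRoot_or_largerRoot_le hb hab.le (hE_bound t ht)) self_mem_Ici
      (hE_init.trans_lt (two_mul_lt_largerRoot hb hab))⟩

/-- Continuation argument for a continuous nonnegative function with a
quadratic self-bound `E ≤ a + b E²` starting below the smaller root. -/
theorem quadratic_bootstrap
    (a b t₀ : ℝ) (ha : 0 < a) (hb : 0 < b) (hab : 4 * a * b < 1) (ht₀ : 0 ≤ t₀)
    (E : ℝ → ℝ)
    (hE_cont : ContinuousOn E (Set.Ici t₀))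
    (hE_nonneg : ∀ t ∈ Set.Ici t₀, 0 ≤ E t)
    (hE_bound : ∀ t ∈ Set.Ici t₀, E t ≤ a + b * (E t) ^ 2)
    (hE_init : E t₀ ≤ 2 * a) :
    (1 - Real.sqrt (1 - 4 * a * b)) / (2 * b) ≤ 2 * a ∧
      ∀ t ∈ Set.Ici t₀, E t ≤ (1 - Real.sqrt (1 - 4 * a * b)) / (2 * b) :=
  quadratic_bootstrap_general a b t₀ ha hb hab E hE_cont hE_bound hE_init
end

section
/- Let 0 ≤ a < 1, 0 ≤ b < 1 and κ > 0. Then there exists a constant C > 0, depending only on a, b and κ, such that for every t > 0: ∫₀ᵗ (t−s)^{−a} e^{−κ(t−s)} (min{s,1})^{−b} ds ≤ C (min{t,1})^{1−a−b}. -/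
/-!
For `t ≤ 1` the weight is `s ^ (-b)` and the damping is at most `1`, so the integral is bounded
by `∫₀ᵗ (t - s) ^ (-a) * s ^ (-b) ds`; as one of `s`, `t - s` is at least `t / 2`, this is at most
a multiple of `t ^ (1 - a - b)`. For `t ≥ 1` the weight is at most `1 + 1_{(0,1)}(s) * s ^ (-b)`:
the first part contributes at most `∫₀^∞ u ^ (-a) * exp (-κ u) du`, and the second at most the
same Beta-type integral at time `1`, because `(t - s) ^ (-a) ≤ (1 - s) ^ (-a)`.
-/

open MeasureTheory Set Real

lemma setIntegral_Ioo_comp_sub_left (f : ℝ → ℝ) {t : ℝ} (ht : 0 ≤ t) :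
    ∫ s in Ioo 0 t, f (t - s) = ∫ s in Ioo 0 t, f s := by
  have h := intervalIntegral.integral_comp_sub_left f t (a := 0) (b := t)
  rw [sub_self, sub_zero] at h
  simpa only [intervalIntegral.integral_of_le ht, integral_Ioc_eq_integral_Ioo] using h

lemma integrableOn_Ioo_comp_sub_left {f : ℝ → ℝ} {t : ℝ} (ht : 0 ≤ t)
    (hf : IntegrableOn f (Ioo 0 t)) : IntegrableOn (fun s ↦ f (t - s)) (Ioo 0 t) := by
  rw [← intervalIntegrable_iff_integrableOn_Ioo_of_le ht] at hf ⊢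
  simpa only [sub_self, sub_zero] using (hf.comp_sub_left t).symm

lemma setIntegral_Ioo_comp_sub_left_le_setIntegral_Ioi {f : ℝ → ℝ} (hf : IntegrableOn f (Ioi 0))
    (hf₀ : ∀ x ∈ Ioi (0 : ℝ), 0 ≤ f x) {t : ℝ} (ht : 0 ≤ t) :
    ∫ s in Ioo 0 t, f (t - s) ≤ ∫ x in Ioi 0, f x := by
  rw [setIntegral_Ioo_comp_sub_left f ht]
  exact setIntegral_mono_set hf (ae_restrict_of_forall_mem measurableSet_Ioi hf₀)
    Ioo_subset_Ioi_self.eventuallyLE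

lemma integral_Ioo_rpow {r t : ℝ} (hr : -1 < r) (ht : 0 ≤ t) :
    ∫ s in Ioo 0 t, s ^ r = t ^ (r + 1) / (r + 1) := by
  rw [← integral_Ioc_eq_integral_Ioo, ← intervalIntegral.integral_of_le ht,
    integral_rpow (Or.inl hr), zero_rpow (by linarith), sub_zero]

lemma integral_Ioo_sub_rpow {r t : ℝ} (hr : -1 < r) (ht : 0 ≤ t) :
    ∫ s in Ioo 0 t, (t - s) ^ r = t ^ (r + 1) / (r + 1) := by
  rw [setIntegral_Ioo_comp_sub_left (· ^ r) ht, integral_Ioo_rpow hr ht]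

lemma integrableOn_Ioo_sub_rpow {r t : ℝ} (hr : -1 < r) (ht : 0 < t) :
    IntegrableOn (fun s ↦ (t - s) ^ r) (Ioo 0 t) :=
  integrableOn_Ioo_comp_sub_left ht.le ((intervalIntegral.integrableOn_Ioo_rpow_iff ht).2 hr)

section Beta

variable {a b : ℝ}

/-- Since `max s (t - s) ≥ t / 2`, this dominates `(t - s) ^ (-a) * s ^ (-b)` on `(0, t)`. -/
noncomputable def betaMajorant (a b t s : ℝ) : ℝ :=
  (t / 2) ^ (-a) * s ^ (-b) + (t / 2) ^ (-b) * (t - s) ^ (-a)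

lemma sub_rpow_neg_mul_rpow_neg_le_betaMajorant (ha : 0 ≤ a) (hb : 0 ≤ b) {s t : ℝ} (hs : 0 < s)
    (hst : s < t) :
    (t - s) ^ (-a) * s ^ (-b) ≤ betaMajorant a b t s := by
  unfold betaMajorant
  have hs' : 0 ≤ s ^ (-b) := rpow_nonneg hs.le _
  have hts' : 0 ≤ (t - s) ^ (-a) := rpow_nonneg (by linarith) _
  rcases le_total (t / 2) (t - s) with h | h
  · have := rpow_le_rpow_of_nonpos (by linarith) h (neg_nonpos.2 ha)
    nlinarith [mul_le_mul_of_nonneg_right this hs', rpow_nonneg (by linarith : 0 ≤ t / 2) (-b)]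
  · have := rpow_le_rpow_of_nonpos (by linarith) (by linarith : t / 2 ≤ s) (neg_nonpos.2 hb)
    nlinarith [mul_le_mul_of_nonneg_left this hts', rpow_nonneg (by linarith : 0 ≤ t / 2) (-a)]

lemma integrableOn_betaMajorant (ha1 : a < 1) (hb1 : b < 1) {t : ℝ} (ht : 0 < t) :
    IntegrableOn (betaMajorant a b t) (Ioo 0 t) :=
  (((intervalIntegral.integrableOn_Ioo_rpow_iff ht).2 (by linarith)).const_mul _).add
    ((integrableOn_Ioo_sub_rpow (by linarith) ht).const_mul _)

lemma integral_betaMajorant (ha1 : a < 1) (hb1 : b < 1) {t : ℝ} (ht : 0 < t) :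
    ∫ s in Ioo 0 t, betaMajorant a b t s =
      (2 ^ a / (1 - b) + 2 ^ b / (1 - a)) * t ^ (1 - a - b) := by
  unfold betaMajorant
  rw [integral_add (((intervalIntegral.integrableOn_Ioo_rpow_iff ht).2 (by linarith)).const_mul _)
      ((integrableOn_Ioo_sub_rpow (by linarith) ht).const_mul _),
    integral_const_mul, integral_const_mul, integral_Ioo_rpow (by linarith) ht.le,
    integral_Ioo_sub_rpow (by linarith) ht.le]
  have e₁ : t ^ (-b + 1) = t ^ a * t ^ (1 - a - b) := by rw [← rpow_add ht]; ring_nf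
  have e₂ : t ^ (-a + 1) = t ^ b * t ^ (1 - a - b) := by rw [← rpow_add ht]; ring_nf
  have : 0 < 1 - a := by linarith
  have : 0 < 1 - b := by linarith
  rw [div_rpow ht.le zero_le_two, div_rpow ht.le zero_le_two, rpow_neg ht.le, rpow_neg ht.le,
    rpow_neg zero_le_two, rpow_neg zero_le_two, e₁, e₂, neg_add_eq_sub, neg_add_eq_sub]
  field_simp

lemma integrableOn_Ioo_sub_rpow_mul_rpow (ha : 0 ≤ a) (ha1 : a < 1) (hb : 0 ≤ b) (hb1 : b < 1)
    {t : ℝ} (ht : 0 < t) : IntegrableOn (fun s ↦ (t - s) ^ (-a) * s ^ (-b)) (Ioo 0 t) :=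
  (integrableOn_betaMajorant ha1 hb1 ht).mono' (by fun_prop) <|
    ae_restrict_of_forall_mem measurableSet_Ioo fun s hs ↦ by
      rw [norm_of_nonneg
        (mul_nonneg (rpow_nonneg (sub_nonneg.2 hs.2.le) _) (rpow_nonneg hs.1.le _))]
      exact sub_rpow_neg_mul_rpow_neg_le_betaMajorant ha hb hs.1 hs.2

lemma integral_Ioo_sub_rpow_mul_rpow_le (ha : 0 ≤ a) (ha1 : a < 1) (hb : 0 ≤ b) (hb1 : b < 1)
    {t : ℝ} (ht : 0 < t) :
    ∫ s in Ioo 0 t, (t - s) ^ (-a) * s ^ (-b) ≤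
      (2 ^ a / (1 - b) + 2 ^ b / (1 - a)) * t ^ (1 - a - b) := by
  rw [← integral_betaMajorant ha1 hb1 ht]
  refine integral_mono_of_nonneg ?_ (integrableOn_betaMajorant ha1 hb1 ht) ?_ <;>
    refine ae_restrict_of_forall_mem measurableSet_Ioo fun s hs ↦ ?_
  · exact mul_nonneg (rpow_nonneg (sub_nonneg.2 hs.2.le) _) (rpow_nonneg hs.1.le _)
  · exact sub_rpow_neg_mul_rpow_neg_le_betaMajorant ha hb hs.1 hs.2

end Beta

lemma integrableOn_Ioi_rpow_mul_exp_neg_mul {r κ : ℝ} (hr : -1 < r) (hκ : 0 < κ) :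
    IntegrableOn (fun u ↦ u ^ r * exp (-κ * u)) (Ioi 0) := by
  simpa only [rpow_one] using integrableOn_rpow_mul_exp_neg_mul_rpow hr one_pos hκ

noncomputable def weightedConvolution (a b κ t : ℝ) : ℝ :=
  ∫ s in Ioo 0 t, (t - s) ^ (-a) * exp (-κ * (t - s)) * min s 1 ^ (-b)

section WeightedConvolution

variable {a b κ t : ℝ}

lemma weightedConvolution_le_of_le_one (ha : 0 ≤ a) (ha1 : a < 1) (hb : 0 ≤ b) (hb1 : b < 1)
    (hκ : 0 ≤ κ) (ht : 0 < t) (ht1 : t ≤ 1) :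
    weightedConvolution a b κ t ≤ (2 ^ a / (1 - b) + 2 ^ b / (1 - a)) * t ^ (1 - a - b) := by
  refine le_trans ?_ (integral_Ioo_sub_rpow_mul_rpow_le ha ha1 hb hb1 ht)
  refine integral_mono_of_nonneg ?_ (integrableOn_Ioo_sub_rpow_mul_rpow ha ha1 hb hb1 ht) ?_ <;>
    refine ae_restrict_of_forall_mem measurableSet_Ioo fun s ⟨hs, hst⟩ ↦ ?_ <;>
    have := rpow_nonneg (sub_nonneg.2 hst.le) (-a) <;>
    dsimp only
  · positivity
  · rw [min_eq_left (hst.trans_le ht1).le]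
    have hexp : exp (-κ * (t - s)) ≤ 1 := exp_le_one_iff.2 (by nlinarith)
    exact mul_le_mul_of_nonneg_right (mul_le_of_le_one_right this hexp) (rpow_nonneg hs.le _)

lemma sub_rpow_mul_exp_mul_min_rpow_le (ha : 0 ≤ a) (hκ : 0 ≤ κ) {s : ℝ} (hs : 0 < s)
    (hst : s < t) (ht1 : 1 ≤ t) :
    (t - s) ^ (-a) * exp (-κ * (t - s)) * min s 1 ^ (-b) ≤
      (t - s) ^ (-a) * exp (-κ * (t - s)) +
        (Ioo 0 1).indicator (fun s ↦ (1 - s) ^ (-a) * s ^ (-b)) s := by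
  have hA := rpow_nonneg (sub_nonneg.2 hst.le) (-a)
  rcases lt_or_ge s 1 with hs1 | hs1
  · rw [min_eq_left hs1.le, indicator_of_mem (show s ∈ Ioo 0 1 from ⟨hs, hs1⟩)]
    have hexp : exp (-κ * (t - s)) ≤ 1 := exp_le_one_iff.2 (by nlinarith)
    have hts : (t - s) ^ (-a) ≤ (1 - s) ^ (-a) :=
      rpow_le_rpow_of_nonpos (by linarith) (by linarith) (by linarith)
    have := rpow_nonneg hs.le (-b)
    calc (t - s) ^ (-a) * exp (-κ * (t - s)) * s ^ (-b) ≤ (1 - s) ^ (-a) * 1 * s ^ (-b) := by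
          gcongr
      _ ≤ _ := by
          rw [mul_one]
          exact le_add_of_nonneg_left (by positivity)
  · rw [min_eq_right hs1, one_rpow, mul_one,
      indicator_of_notMem (show s ∉ Ioo 0 1 from fun h ↦ h.2.not_ge hs1), add_zero]

lemma weightedConvolution_le_of_one_le (ha : 0 ≤ a) (ha1 : a < 1) (hb : 0 ≤ b) (hb1 : b < 1)
    (hκ : 0 < κ) (ht1 : 1 ≤ t) :
    weightedConvolution a b κ t ≤
      (∫ u in Ioi 0, u ^ (-a) * exp (-κ * u)) + (2 ^ a / (1 - b) + 2 ^ b / (1 - a)) := by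
  set k : ℝ → ℝ := fun u ↦ u ^ (-a) * exp (-κ * u)
  set β : ℝ → ℝ := fun s ↦ (1 - s) ^ (-a) * s ^ (-b)
  have hk := integrableOn_Ioi_rpow_mul_exp_neg_mul (by linarith : -1 < -a) hκ
  have hkt : IntegrableOn (fun s ↦ k (t - s)) (Ioo 0 t) :=
    integrableOn_Ioo_comp_sub_left (by linarith) (hk.mono_set Ioo_subset_Ioi_self)
  have hβ : IntegrableOn ((Ioo 0 1).indicator β) (Ioo 0 t) :=
    ((integrableOn_Ioo_sub_rpow_mul_rpow ha ha1 hb hb1 one_pos).integrable_indicator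
      measurableSet_Ioo).integrableOn
  calc weightedConvolution a b κ t ≤ ∫ s in Ioo 0 t, (k (t - s) + (Ioo 0 1).indicator β s) := by
        refine integral_mono_of_nonneg ?_ (hkt.add hβ) ?_ <;>
          refine ae_restrict_of_forall_mem measurableSet_Ioo fun s ⟨hs, hst⟩ ↦ ?_
        · have := rpow_nonneg (sub_nonneg.2 hst.le) (-a)
          dsimp only
          positivity
        · exact sub_rpow_mul_exp_mul_min_rpow_le ha hκ.le hs hst ht1
    _ = (∫ s in Ioo 0 t, k (t - s)) + ∫ s in Ioo 0 1, β s := by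
        rw [integral_add hkt hβ, setIntegral_indicator measurableSet_Ioo, Ioo_inter_Ioo,
          max_self, min_eq_right ht1]
    _ ≤ _ := by
        gcongr
        · exact setIntegral_Ioo_comp_sub_left_le_setIntegral_Ioi hk
            (fun u hu ↦ mul_nonneg (rpow_nonneg (le_of_lt hu) _) (exp_pos _).le) (by linarith)
        · simpa using integral_Ioo_sub_rpow_mul_rpow_le ha ha1 hb hb1 one_pos

end WeightedConvolution

/-- Weighted convolution estimate: a weakly singular, exponentially damped kernel
convolved against the weight `min{s,1}^{-b}`. -/
theorem convolution_min_weight_estimate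
    (a b κ : ℝ) (ha0 : 0 ≤ a) (ha1 : a < 1) (hb0 : 0 ≤ b) (hb1 : b < 1) (hκ : 0 < κ) :
    ∃ C > 0, ∀ t : ℝ, 0 < t →
      (∫ s in Set.Ioo (0:ℝ) t, (t - s) ^ (-a) * Real.exp (-κ * (t - s)) * (min s 1) ^ (-b))
        ≤ C * (min t 1) ^ (1 - a - b) := by
  set K := 2 ^ a / (1 - b) + 2 ^ b / (1 - a)
  set G := ∫ u in Ioi 0, u ^ (-a) * exp (-κ * u)
  have hK : 0 < K := by
    have : 0 < 1 - a := by linarith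
    have : 0 < 1 - b := by linarith
    positivity
  have hG : 0 ≤ G := setIntegral_nonneg measurableSet_Ioi fun u hu ↦
    mul_nonneg (rpow_nonneg (le_of_lt hu) _) (exp_pos _).le
  refine ⟨K + G, by positivity, fun t ht ↦ ?_⟩
  change weightedConvolution a b κ t ≤ _
  rcases le_total t 1 with ht1 | ht1
  · rw [min_eq_left ht1]
    calc weightedConvolution a b κ t ≤ K * t ^ (1 - a - b) :=
          weightedConvolution_le_of_le_one ha0 ha1 hb0 hb1 hκ.le ht ht1
      _ ≤ (K + G) * t ^ (1 - a - b) := by gcongr; linarith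
  · rw [min_eq_right ht1, one_rpow, mul_one]
    linarith [weightedConvolution_le_of_one_le ha0 ha1 hb0 hb1 hκ ht1]
end
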